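/- arXiv:q-alg/9712012 — 6 statements merged into one kernel-verified Lean document; each statement's English description precedes it below -/
import Mathlib

section
/- For every integer l ≥ 0, the identity ∑_{n=0}^{l} (n+1)(n+2)(2n+3)(3n+4)(3n+5)/120 = ∑_{i=0}^{⌊l/2⌋} ∑_{j₁=i}^{l-i} ∑_{j₀=i}^{l-i} (j₁+1)(j₀+1)(j₁+j₀+2)/2 holds. (This is the cardinality identity ♯𝒢^l = ♯𝒜 underlying Proposition 'dimension', equating the total size of the G₂-crystals ⊕_{n=0}^{l} B^{G₂}(nΛ₁) with the total size of the A₂-crystals ⊕_{i=0}^{⌊l/2⌋} ⊕_{i≤j₁,j₀≤l-i} B^{A₂}(j₁Λ₁+j₀Λ₀).) -/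
open Finset

private lemma q1 (N : ℕ) : ∑ j ∈ range N, ((j : ℚ) + 1) = (N : ℚ) * ((N : ℚ) + 1) / 2 := by
  induction N with
  | zero => simp
  | succ n ih => rw [sum_range_succ, ih]; push_cast; ring

private lemma q2 (N : ℕ) : ∑ j ∈ range N, ((j : ℚ) + 1) ^ 2 = (N : ℚ) * ((N : ℚ) + 1) * (2 * (N : ℚ) + 1) / 6 := by
  induction N with
  | zero => simp
  | succ n ih => rw [sum_range_succ, ih]; push_cast; ring

private lemma icc1 (a b : ℕ) (h : a ≤ b + 1) :
    ∑ j ∈ Icc a b, ((j : ℚ) + 1) = ((b : ℚ) + 1) * ((b : ℚ) + 2) / 2 - (a : ℚ) * ((a : ℚ) + 1) / 2 := by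
  rw [← Finset.Ico_add_one_right_eq_Icc, sum_Ico_eq_sub _ h, q1 (b + 1), q1 a]
  push_cast; ring

private lemma icc2 (a b : ℕ) (h : a ≤ b + 1) :
    ∑ j ∈ Icc a b, ((j : ℚ) + 1) ^ 2 =
      ((b : ℚ) + 1) * ((b : ℚ) + 2) * (2 * (b : ℚ) + 3) / 6 -
        (a : ℚ) * ((a : ℚ) + 1) * (2 * (a : ℚ) + 1) / 6 := by
  rw [← Finset.Ico_add_one_right_eq_Icc, sum_Ico_eq_sub _ h, q2 (b + 1), q2 a]
  push_cast; ring

private lemma key (s : Finset ℕ) :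
    ∑ j1 ∈ s, ∑ j0 ∈ s,
      ((j1 : ℚ) + 1) * ((j0 : ℚ) + 1) * ((j1 : ℚ) + (j0 : ℚ) + 2) / 2
    = (∑ j ∈ s, ((j : ℚ) + 1)) * (∑ j ∈ s, ((j : ℚ) + 1) ^ 2) := by
  calc
    ∑ j1 ∈ s, ∑ j0 ∈ s,
        ((j1 : ℚ) + 1) * ((j0 : ℚ) + 1) * ((j1 : ℚ) + (j0 : ℚ) + 2) / 2
      = ∑ j1 ∈ s, (((j1 : ℚ) + 1) ^ 2 / 2 * (∑ j ∈ s, ((j : ℚ) + 1)) +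
          ((j1 : ℚ) + 1) / 2 * (∑ j ∈ s, ((j : ℚ) + 1) ^ 2)) := by
        refine sum_congr rfl fun j1 _ => ?_
        rw [mul_sum, mul_sum, ← sum_add_distrib]
        exact sum_congr rfl fun j0 _ => by ring
    _ = (∑ j1 ∈ s, ((j1 : ℚ) + 1) ^ 2 / 2) * (∑ j ∈ s, ((j : ℚ) + 1)) +
          (∑ j1 ∈ s, ((j1 : ℚ) + 1) / 2) * (∑ j ∈ s, ((j : ℚ) + 1) ^ 2) := by
        rw [sum_add_distrib, sum_mul, sum_mul]
    _ = _ := by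
        rw [← sum_div, ← sum_div]; ring

private lemma inner_closed (L : ℚ) (N : ℕ) :
    ∑ i ∈ range N,
      ((L - (i : ℚ) + 1) * (L - (i : ℚ) + 2) / 2 - (i : ℚ) * ((i : ℚ) + 1) / 2) *
        ((L - (i : ℚ) + 1) * (L - (i : ℚ) + 2) * (2 * (L - (i : ℚ)) + 3) / 6 -
          (i : ℚ) * ((i : ℚ) + 1) * (2 * (i : ℚ) + 1) / 6)
    = (61/15) * N + (341/30) * N * L + (37/3) * N * L^2 + (13/2) * N * L^3
      + (5/3) * N * L^4 + (1/6) * N * L^5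
      - (17/3) * N^2 - (37/3) * N^2 * L - (39/4) * N^2 * L^2 - (10/3) * N^2 * L^3
      - (5/12) * N^2 * L^4
      + (11/3) * N^3 + (35/6) * N^3 * L + 3 * N^3 * L^2 + (1/2) * N^3 * L^3
      - (4/3) * N^4 - (4/3) * N^4 * L - (1/3) * N^4 * L^2
      + (4/15) * N^5 + (2/15) * N^5 * L := by
  induction N with
  | zero => simp
  | succ n ih => rw [sum_range_succ, ih]; push_cast; ring

private lemma lhs_closed (l : ℕ) :
    ∑ n ∈ range (l + 1),
      ((n : ℚ) + 1) * ((n : ℚ) + 2) * (2 * (n : ℚ) + 3) * (3 * (n : ℚ) + 4) *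
        (3 * (n : ℚ) + 5) / 120
    = 1 + (53/15) * l + (301/60) * l^2 + (11/3) * l^3 + (35/24) * l^4
      + (3/10) * l^5 + (1/40) * l^6 := by
  induction l with
  | zero => norm_num
  | succ n ih => rw [sum_range_succ, ih]; push_cast; ring

/-- ♯𝒢^l = ♯𝒜 : the total size of ⊕_{n=0}^{l} B^{G₂}(nΛ₁) equals the total size of
⊕_{i=0}^{⌊l/2⌋} ⊕_{i≤j₁,j₀≤l-i} B^{A₂}(j₁Λ₁+j₀Λ₀), via the Weyl dimension formula. -/
theorem stmt_0 (l : ℕ) :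
    ∑ n ∈ range (l + 1),
      ((n : ℚ) + 1) * ((n : ℚ) + 2) * (2 * (n : ℚ) + 3) * (3 * (n : ℚ) + 4) *
        (3 * (n : ℚ) + 5) / 120 =
    ∑ i ∈ range (l / 2 + 1), ∑ j1 ∈ Icc i (l - i), ∑ j0 ∈ Icc i (l - i),
      ((j1 : ℚ) + 1) * ((j0 : ℚ) + 1) * ((j1 : ℚ) + (j0 : ℚ) + 2) / 2 := by
  have hRHS :
      ∑ i ∈ range (l / 2 + 1), ∑ j1 ∈ Icc i (l - i), ∑ j0 ∈ Icc i (l - i),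
        ((j1 : ℚ) + 1) * ((j0 : ℚ) + 1) * ((j1 : ℚ) + (j0 : ℚ) + 2) / 2
      = ∑ i ∈ range (l / 2 + 1),
          (((l : ℚ) - (i : ℚ) + 1) * ((l : ℚ) - (i : ℚ) + 2) / 2 -
              (i : ℚ) * ((i : ℚ) + 1) / 2) *
            (((l : ℚ) - (i : ℚ) + 1) * ((l : ℚ) - (i : ℚ) + 2) *
                (2 * ((l : ℚ) - (i : ℚ)) + 3) / 6 -
              (i : ℚ) * ((i : ℚ) + 1) * (2 * (i : ℚ) + 1) / 6) := by
    refine sum_congr rfl fun i hi => ?_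
    have hi' : i ≤ l / 2 := by
      have := mem_range.mp hi; omega
    have hil : i ≤ l := by omega
    have hle : i ≤ (l - i) + 1 := by omega
    rw [key, icc1 i (l - i) hle, icc2 i (l - i) hle, Nat.cast_sub hil]
  rw [hRHS, inner_closed (l : ℚ) (l / 2 + 1), lhs_closed]
  rcases Nat.even_or_odd l with ⟨q, hq⟩ | ⟨q, hq⟩
  · have hdiv : l / 2 = q := by omega
    subst hq
    rw [hdiv]
    push_cast
    ring
  · have hdiv : l / 2 = q := by omega
    subst hq
    rw [hdiv]
    push_cast
    ring
end

section
/- For every integer l ≥ 0, (l+1)(l+2)(2l+3)(3l+4)(3l+5)/120 = ∑_{i=0}^{⌊l/2⌋} ( ∑_{k=i}^{l-i-1} (k+1)(l-i+1)(k+l-i+2)/2 + ∑_{j=i}^{l-i} (l-i+1)(j+1)(l-i+j+2)/2 ), where a sum whose lower limit exceeds its upper limit is empty. (This is equation (dimGl1Amul): ♯B^{G₂}(lΛ₁) = ∑_{i=0}^{⌊l/2⌋}(∑_{k=i}^{l-i-1} ♯B^{A₂}(kΛ₁+(l-i)Λ₂) + ∑_{j=i}^{l-i} ♯B^{A₂}((l-i)Λ₁+jΛ₀)).)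 -/
open Finset

/-- Antiderivative of `x ↦ (x+1)(m+1)(x+m+2)/2` (so that `anti m (x+1) - anti m x`
equals that value, with `anti m 0 = 0`). -/
def anti (m x : ℚ) : ℚ :=
  (m + 1) / 2 * ((x - 1) * x * (2 * x - 1) / 6 + (m + 3) * x * (x - 1) / 2 + (m + 2) * x)

/-- Antiderivative in `n` of the `i`-th summand of the outer sum. -/
def bigG (n l : ℚ) : ℚ :=
  121/30 * n + 11 * n * l + 67/6 * n * l^2 + 5 * n * l^3 + 5/6 * n * l^4
    - 11/2 * n^2 - 67/6 * n^2 * l - 15/2 * n^2 * l^2 - 5/3 * n^2 * l^3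
    + 10/3 * n^3 + 9/2 * n^3 * l + 3/2 * n^3 * l^2
    - n^4 - 2/3 * n^4 * l + 2/15 * n^5

/-- Telescoping sum over `Icc` in `ℤ`. -/
lemma tele (f F : ℤ → ℚ) (h : ∀ k : ℤ, F (k + 1) - F k = f k) (a : ℤ) :
    ∀ b : ℤ, a - 1 ≤ b → ∑ k ∈ Icc a b, f k = F (b + 1) - F a := by
  refine Int.le_induction ?_ ?_
  · rw [Finset.Icc_eq_empty (by omega), show a - 1 + 1 = a by ring]
    simp
  · intro n hn ih
    have hins : Icc a (n + 1) = insert (n + 1) (Icc a n) := by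
      ext x; simp only [Finset.mem_Icc, Finset.mem_insert]; omega
    rw [hins, Finset.sum_insert (by simp), ih, ← h (n + 1)]
    ring

/-- Equation (dimGl1Amul):
♯B^{G₂}(lΛ₁) = ∑_{i=0}^{⌊l/2⌋}(∑_{k=i}^{l-i-1} ♯B^{A₂}(kΛ₁+(l-i)Λ₂)
  + ∑_{j=i}^{l-i} ♯B^{A₂}((l-i)Λ₁+jΛ₀)),
where a sum whose lower limit exceeds its upper limit is empty. -/
theorem stmt_1 (l : ℤ) (hl : 0 ≤ l) :
    ((l : ℚ) + 1) * ((l : ℚ) + 2) * (2 * (l : ℚ) + 3) * (3 * (l : ℚ) + 4) *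
        (3 * (l : ℚ) + 5) / 120 =
    ∑ i ∈ Icc (0 : ℤ) (l / 2),
      ((∑ k ∈ Icc i (l - i - 1),
          ((k : ℚ) + 1) * (((l - i : ℤ) : ℚ) + 1) * ((k : ℚ) + ((l - i : ℤ) : ℚ) + 2) / 2) +
       (∑ j ∈ Icc i (l - i),
          (((l - i : ℤ) : ℚ) + 1) * ((j : ℚ) + 1) * (((l - i : ℤ) : ℚ) + (j : ℚ) + 2) / 2)) := by
  have hanti : ∀ m : ℚ, ∀ k : ℤ,
      anti m ((k : ℚ) + 1) - anti m (k : ℚ)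
        = ((k : ℚ) + 1) * (m + 1) * ((k : ℚ) + m + 2) / 2 := by
    intro m k; unfold anti; ring
  -- rewrite each summand of the outer sum in closed form
  have hcong : ∀ i ∈ Icc (0 : ℤ) (l / 2),
      ((∑ k ∈ Icc i (l - i - 1),
          ((k : ℚ) + 1) * (((l - i : ℤ) : ℚ) + 1) * ((k : ℚ) + ((l - i : ℤ) : ℚ) + 2) / 2) +
       (∑ j ∈ Icc i (l - i),
          (((l - i : ℤ) : ℚ) + 1) * ((j : ℚ) + 1) * (((l - i : ℤ) : ℚ) + (j : ℚ) + 2) / 2))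
      = bigG ((i : ℚ) + 1) (l : ℚ) - bigG (i : ℚ) (l : ℚ) := by
    intro i hi
    rw [Finset.mem_Icc] at hi
    have hil : 2 * i ≤ l := by omega
    set m : ℚ := ((l - i : ℤ) : ℚ) with hm
    have h1 : ∑ k ∈ Icc i (l - i - 1),
        ((k : ℚ) + 1) * (m + 1) * ((k : ℚ) + m + 2) / 2
        = anti m ((l - i - 1 : ℤ) + 1 : ℚ) - anti m (i : ℚ) := by
      refine tele (fun k => ((k : ℚ) + 1) * (m + 1) * ((k : ℚ) + m + 2) / 2)
        (fun k => anti m (k : ℚ)) ?_ i (l - i - 1) (by omega) |>.trans ?_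
      · intro k
        have := hanti m k
        push_cast at this ⊢
        linarith [this]
      · push_cast; ring_nf
    have h2 : ∑ j ∈ Icc i (l - i),
        (m + 1) * ((j : ℚ) + 1) * (m + (j : ℚ) + 2) / 2
        = anti m ((l - i : ℤ) + 1 : ℚ) - anti m (i : ℚ) := by
      refine tele (fun j => (m + 1) * ((j : ℚ) + 1) * (m + (j : ℚ) + 2) / 2)
        (fun k => anti m (k : ℚ)) ?_ i (l - i) (by omega) |>.trans ?_
      · intro k
        have := hanti m k
        push_cast at this ⊢
        linarith [this]
      · push_cast; ring_nf
    rw [h1, h2]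
    have hmval : m = (l : ℚ) - (i : ℚ) := by rw [hm]; push_cast; ring
    rw [hmval]
    unfold anti bigG
    push_cast
    ring
  rw [Finset.sum_congr rfl hcong]
  have houter : ∑ i ∈ Icc (0 : ℤ) (l / 2),
      (bigG ((i : ℚ) + 1) (l : ℚ) - bigG (i : ℚ) (l : ℚ))
      = bigG ((l / 2 + 1 : ℤ) : ℚ) (l : ℚ) - bigG ((0 : ℤ) : ℚ) (l : ℚ) := by
    refine tele (fun i => bigG ((i : ℚ) + 1) (l : ℚ) - bigG (i : ℚ) (l : ℚ))
      (fun i => bigG (i : ℚ) (l : ℚ)) ?_ 0 (l / 2) (by omega)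
    intro k; push_cast; ring
  rw [houter]
  rcases Int.even_or_odd l with ⟨q, hq⟩ | ⟨q, hq⟩
  · have hd : l / 2 = q := by omega
    rw [hd, hq]
    unfold bigG
    push_cast
    ring
  · have hd : l / 2 = q := by omega
    rw [hd, hq]
    unfold bigG
    push_cast
    ring
end

section
/- For every integer l ≥ 0, ∑_{i=0}^{⌊l/2⌋} ( ∑_{k=i}^{l-i} d_{A₂}(l-k, l-i) + ∑_{j=i+1}^{l-i} d_{A₂}(l-i, l-j) ) = d_{G₂}(l), where d_{A₂}(m,n) = (m+1)(n+1)(m+n+2)/2, d_{G₂}(n) = (n+1)(n+2)(2n+3)(3n+4)(3n+5)/120, and a sum whose lower limit exceeds its upper limit is empty. (This is the identity concluding the proof of Proposition 'lLambda'.) -/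
open Finset

/-- Cardinality of the A₂-crystal B^{A₂}(mΛ₁+nΛ₀) by the Weyl dimension formula. -/
def dA2 (m n : ℤ) : ℚ := ((m : ℚ) + 1) * ((n : ℚ) + 1) * ((m : ℚ) + (n : ℚ) + 2) / 2

/-- Cardinality of the G₂-crystal B^{G₂}(nΛ₁) by the Weyl dimension formula. -/
def dG2 (n : ℤ) : ℚ :=
  ((n : ℚ) + 1) * ((n : ℚ) + 2) * (2 * (n : ℚ) + 3) * (3 * (n : ℚ) + 4) * (3 * (n : ℚ) + 5) / 120

lemma icc_succ_right (a b : ℤ) (h : a ≤ b + 1) :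
    Icc a (b + 1) = insert (b + 1) (Icc a b) := by
  ext x; simp only [mem_Icc, mem_insert]; omega

/-- Closed form for the sum of a quartic polynomial over an integer interval. -/
lemma quartic_sum (a : ℤ) (c0 c1 c2 c3 c4 : ℚ) : ∀ b : ℤ, a - 1 ≤ b →
    ∑ m ∈ Icc a b, (c4 * (m : ℚ)^4 + c3 * (m : ℚ)^3 + c2 * (m : ℚ)^2 + c1 * (m : ℚ) + c0)
      = c4 * (((b:ℚ) * (b+1) * (2*b+1) * (3*(b:ℚ)^2+3*b-1)
              - ((a:ℚ)-1) * a * (2*a-1) * (3*(a:ℚ)^2-3*a-1)) / 30)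
      + c3 * (((b:ℚ)^2 * ((b:ℚ)+1)^2 - ((a:ℚ)-1)^2 * (a:ℚ)^2) / 4)
      + c2 * (((b:ℚ) * (b+1) * (2*b+1) - ((a:ℚ)-1) * a * (2*a-1)) / 6)
      + c1 * (((b:ℚ) * (b+1) - ((a:ℚ)-1) * a) / 2)
      + c0 * ((b:ℚ) - a + 1) := by
  refine Int.le_induction ?_ ?_
  · have : Icc a (a - 1) = ∅ := Icc_eq_empty (by omega)
    rw [this, sum_empty]; push_cast; ring
  · intro b hb ih
    rw [icc_succ_right a b (by omega), sum_insert (by simp only [mem_Icc]; omega), ih]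
    push_cast; ring

/-- The identity concluding the proof of Proposition `lLambda`:
∑_{i=0}^{⌊l/2⌋} ( ∑_{k=i}^{l-i} d_{A₂}(l-k, l-i) + ∑_{j=i+1}^{l-i} d_{A₂}(l-i, l-j) ) = d_{G₂}(l). -/
theorem stmt_2 (l : ℤ) (hl : 0 ≤ l) :
    ∑ i ∈ Icc (0 : ℤ) (l / 2),
      ((∑ k ∈ Icc i (l - i), dA2 (l - k) (l - i)) +
       (∑ j ∈ Icc (i + 1) (l - i), dA2 (l - i) (l - j))) = dG2 l := by
  have key : ∀ i ∈ Icc (0 : ℤ) (l / 2),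
      ((∑ k ∈ Icc i (l - i), dA2 (l - k) (l - i)) +
       (∑ j ∈ Icc (i + 1) (l - i), dA2 (l - i) (l - j)))
      = (2/3) * (i:ℚ)^4 + (-(8/3) * (l:ℚ) - 8/3) * (i:ℚ)^3
        + ((9/2) * (l:ℚ)^2 + (19/2) * (l:ℚ) + 16/3) * (i:ℚ)^2
        + (-(10/3) * (l:ℚ)^3 - (21/2) * (l:ℚ)^2 - (23/2) * (l:ℚ) - 13/3) * (i:ℚ)
        + ((5/6) * (l:ℚ)^4 + (10/3) * (l:ℚ)^3 + (31/6) * (l:ℚ)^2 + (11/3) * (l:ℚ) + 1) := by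
    intro i hi
    simp only [mem_Icc] at hi
    have h2i : 2 * i ≤ l := by omega
    have hb1 : i - 1 ≤ l - i := by omega
    have hb2 : (i + 1) - 1 ≤ l - i := by omega
    have e1 : ∑ k ∈ Icc i (l - i), dA2 (l - k) (l - i)
        = ∑ k ∈ Icc i (l - i), ((0:ℚ) * (k:ℚ)^4 + 0 * (k:ℚ)^3
            + (((l:ℚ) - i + 1) / 2) * (k:ℚ)^2
            + (-(((l:ℚ) - i + 1) * (3*(l:ℚ) - i + 3)) / 2) * (k:ℚ)
            + (((l:ℚ) - i + 1) * ((l:ℚ) + 1) * (2*(l:ℚ) - i + 2) / 2)) :=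
      sum_congr rfl fun k _ => by simp only [dA2]; push_cast; ring
    have e2 : ∑ j ∈ Icc (i + 1) (l - i), dA2 (l - i) (l - j)
        = ∑ j ∈ Icc (i + 1) (l - i), ((0:ℚ) * (j:ℚ)^4 + 0 * (j:ℚ)^3
            + (((l:ℚ) - i + 1) / 2) * (j:ℚ)^2
            + (-(((l:ℚ) - i + 1) * (3*(l:ℚ) - i + 3)) / 2) * (j:ℚ)
            + (((l:ℚ) - i + 1) * ((l:ℚ) + 1) * (2*(l:ℚ) - i + 2) / 2)) :=
      sum_congr rfl fun j _ => by simp only [dA2]; push_cast; ring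
    rw [e1, e2, quartic_sum _ _ _ _ _ _ _ hb1, quartic_sum _ _ _ _ _ _ _ hb2]
    push_cast; ring
  rw [sum_congr rfl key,
    quartic_sum 0 _ _ _ _ _ (l / 2) (by omega)]
  rcases Int.even_or_odd l with ⟨m, rfl⟩ | ⟨m, rfl⟩
  · rw [show (m + m) / 2 = m from by omega]
    simp only [dG2]; push_cast; ring
  · rw [show (2 * m + 1) / 2 = m from by omega]
    simp only [dG2]; push_cast; ring
end

section
/- For all nonnegative integers j₁ and j₀, the number of triples (p,q,r) of nonnegative integers satisfying 0 ≤ p ≤ j₀, p ≤ q ≤ p + j₁, and 0 ≤ r ≤ j₀ + q − 2p equals (j₁+1)(j₀+1)(j₁+j₀+2)/2. (This says that the parameterization b = f̃₀^r f̃₁^q f̃₀^p (highest weight vector) of the A₂-crystal B^{A₂}(j₁Λ₁+j₀Λ₀) by such triples matches the Weyl dimension formula.) -/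
/-!
Summing over `r` first, the count is `∑ p ≤ j₀, ∑ q ∈ [p, p + j₁], (j₀ + q - 2p + 1)`.
Writing `q = p + s` and replacing `p` by `j₀ - p` turns it into the sum of `p + s + 1`
over the grid `p ≤ j₀`, `s ≤ j₁`, whose double is `(j₀ + 1)(j₁ + 1)(j₀ + j₁ + 2)`.
-/

open Finset

lemma sum_Icc_add_eq_sum_range {M : Type*} [AddCommMonoid M] (f : ℕ → M) (a n : ℕ) :
    ∑ q ∈ Icc a (a + n), f q = ∑ s ∈ range (n + 1), f (a + s) := by
  rw [← Ico_add_one_right_eq_Icc, sum_Ico_eq_sum_range, add_assoc, Nat.add_sub_cancel_left]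

lemma two_mul_sum_range_add_succ (c n : ℕ) :
    2 * ∑ s ∈ range n, (c + s + 1) = n * (2 * c + n + 1) := by
  induction n with
  | zero => simp
  | succ n ih =>
    rw [sum_range_succ, Nat.mul_add, ih]
    ring

lemma two_mul_sum_range_sum_range_add_succ (m n : ℕ) :
    2 * ∑ p ∈ range m, ∑ s ∈ range n, (p + s + 1) = m * n * (m + n) := by
  induction m with
  | zero => simp
  | succ m ih =>
    rw [sum_range_succ, Nat.mul_add, ih, two_mul_sum_range_add_succ]
    ring

lemma sum_Icc_sub_two_mul_succ {p j0 : ℕ} (hp : p ≤ j0) (j1 : ℕ) :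
    ∑ q ∈ Icc p (p + j1), (j0 + q - 2 * p + 1) = ∑ s ∈ range (j1 + 1), (j0 - p + s + 1) := by
  rw [sum_Icc_add_eq_sum_range]
  refine sum_congr rfl fun s _ => ?_
  omega

/-- The number of triples (p,q,r) of nonnegative integers with 0 ≤ p ≤ j₀, p ≤ q ≤ p + j₁,
0 ≤ r ≤ j₀ + q − 2p equals (j₁+1)(j₀+1)(j₁+j₀+2)/2, the cardinality of B^{A₂}(j₁Λ₁+j₀Λ₀). -/
theorem stmt_3 (j1 j0 : ℕ) :
    ((range (j0 + 1)).sigma fun p =>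
      (Icc p (p + j1)).sigma fun q => range (j0 + q - 2 * p + 1)).card =
    (j1 + 1) * (j0 + 1) * (j1 + j0 + 2) / 2 := by
  simp only [card_sigma, card_range]
  have reindex : ∑ p ∈ range (j0 + 1), ∑ q ∈ Icc p (p + j1), (j0 + q - 2 * p + 1)
      = ∑ p ∈ range (j0 + 1), ∑ s ∈ range (j1 + 1), (p + s + 1) := by
    rw [← sum_range_reflect _ (j0 + 1)]
    refine sum_congr rfl fun p hp => ?_
    rw [Nat.add_sub_cancel, sum_Icc_sub_two_mul_succ (Nat.sub_le j0 p),
      Nat.sub_sub_self (Nat.lt_succ_iff.mp (mem_range.mp hp))]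
  have double : (j1 + 1) * (j0 + 1) * (j1 + j0 + 2)
      = 2 * ∑ p ∈ range (j0 + 1), ∑ s ∈ range (j1 + 1), (p + s + 1) := by
    rw [two_mul_sum_range_sum_range_add_succ]
    ring
  rw [reindex, double, Nat.mul_div_cancel_left _ two_pos]
end

section
/- Let l, i, j be integers with 0 ≤ i ≤ ⌊l/2⌋ and i ≤ j ≤ l − i. Then (l−j+1)(l−i+1)(2l−i−j+2)/2 = (i+1)(j+1)(i+j+2)/2 + ∑_{m=1}^{l−i−j} M₁(m) + ∑_{m=1}^{l−i−j} M₂(m), where M₁(m) is the number of integer pairs (p,q) with 0 ≤ p ≤ j+m and 0 ≤ q ≤ p+i+m, and M₂(m) is the number of integer pairs (p,q) with 0 ≤ p ≤ i+m−1 and 0 ≤ q ≤ p+j+m. (This is the second cardinality decomposition ♯B^{A₂}((l−j)Λ₁+(l−i)Λ₀) = ♯B^i_{(i,j)} + ∑_m ♯{f̃₁^q f̃₀^p b̄^{l,i}_{(i+m,j+m)}} + ∑_m ♯{ẽ₁^q ẽ₀^p b^{l,i}_{(−j−m,−i−m)}} in the proof of Proposition 'lLambda'.) -/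
open Finset

lemma twoSum (n c : ℕ) : 2 * ∑ p ∈ range n, (p + c + 1) = n * (n + 2 * c + 1) := by
  induction n with
  | zero => simp
  | succ n ih => rw [Finset.sum_range_succ, mul_add, ih]; ring

lemma evenB (i j : ℕ) : 2 ∣ (i + 1) * (j + 1) * (i + j + 2) := by
  rcases Nat.even_or_odd i with hi | hi
  · rcases Nat.even_or_odd j with hj | hj
    · obtain ⟨a, ha⟩ := hi; obtain ⟨b, hb⟩ := hj
      exact ⟨(i+1)*(j+1)*(a+b+1), by subst ha hb; ring⟩
    · obtain ⟨b, hb⟩ := hj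
      exact ⟨(i+1)*(b+1)*(i+j+2), by subst hb; ring⟩
  · obtain ⟨a, ha⟩ := hi
    exact ⟨(a+1)*(j+1)*(i+j+2), by subst ha; ring⟩

lemma keyId (i j k : ℕ) :
    (i + k + 1) * (j + k + 1) * (i + j + 2 * k + 2) =
    (i + 1) * (j + 1) * (i + j + 2) +
      ∑ m ∈ Icc 1 k, ((j + m + 1) * (2 * i + j + 3 * m + 2)
        + (i + m) * (i + 2 * j + 3 * m + 1)) := by
  induction k with
  | zero => simp
  | succ k ih =>
    rw [Finset.sum_Icc_succ_top (by omega : 1 ≤ k + 1)]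
    have h2 : (i + (k + 1) + 1) * (j + (k + 1) + 1) * (i + j + 2 * (k + 1) + 2) =
        (i + k + 1) * (j + k + 1) * (i + j + 2 * k + 2) +
        ((j + (k + 1) + 1) * (2 * i + j + 3 * (k + 1) + 2)
          + (i + (k + 1)) * (i + 2 * j + 3 * (k + 1) + 1)) := by ring
    rw [h2, ih]
    ring

/-- Second cardinality decomposition in the proof of Proposition `lLambda`:
♯B^{A₂}((l−j)Λ₁+(l−i)Λ₀) = ♯B^i_{(i,j)} + ∑_{m=1}^{l−i−j} M₁(m) + ∑_{m=1}^{l−i−j} M₂(m),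
where M₁(m) = #{(p,q) : 0 ≤ p ≤ j+m, 0 ≤ q ≤ p+i+m} and
M₂(m) = #{(p,q) : 0 ≤ p ≤ i+m−1, 0 ≤ q ≤ p+j+m}. -/
theorem stmt_8 (l i j : ℕ) (hi : i ≤ l / 2) (hij : i ≤ j) (hj : j ≤ l - i) :
    (l - j + 1) * (l - i + 1) * (2 * l - i - j + 2) / 2 =
    (i + 1) * (j + 1) * (i + j + 2) / 2 +
      (∑ m ∈ Icc 1 (l - i - j),
        ((range (j + m + 1)).sigma fun p => range (p + i + m + 1)).card) +
      (∑ m ∈ Icc 1 (l - i - j),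
        ((range (i + m)).sigma fun p => range (p + j + m + 1)).card) := by
  obtain ⟨k, rfl⟩ : ∃ k, l = i + j + k := ⟨l - i - j, by omega⟩
  have e1 : i + j + k - j = i + k := by omega
  have e2 : i + j + k - i = j + k := by omega
  have e3 : 2 * (i + j + k) - i - j = i + j + 2 * k := by omega
  have e4 : i + j + k - i - j = k := by omega
  rw [e4, e3, e1, e2]
  simp only [Finset.card_sigma, Finset.card_range]
  have hS₁ : 2 * ∑ m ∈ Icc 1 k, ∑ p ∈ range (j + m + 1), (p + i + m + 1) =
      ∑ m ∈ Icc 1 k, (j + m + 1) * (2 * i + j + 3 * m + 2) := by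
    rw [Finset.mul_sum]
    refine Finset.sum_congr rfl fun m _ => ?_
    calc 2 * ∑ p ∈ range (j + m + 1), (p + i + m + 1)
        = 2 * ∑ p ∈ range (j + m + 1), (p + (i + m) + 1) := by
          congr 1; exact Finset.sum_congr rfl fun p _ => by ring
      _ = (j + m + 1) * ((j + m + 1) + 2 * (i + m) + 1) := twoSum _ _
      _ = (j + m + 1) * (2 * i + j + 3 * m + 2) := by ring
  have hS₂ : 2 * ∑ m ∈ Icc 1 k, ∑ p ∈ range (i + m), (p + j + m + 1) =
      ∑ m ∈ Icc 1 k, (i + m) * (i + 2 * j + 3 * m + 1) := by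
    rw [Finset.mul_sum]
    refine Finset.sum_congr rfl fun m _ => ?_
    calc 2 * ∑ p ∈ range (i + m), (p + j + m + 1)
        = 2 * ∑ p ∈ range (i + m), (p + (j + m) + 1) := by
          congr 1; exact Finset.sum_congr rfl fun p _ => by ring
      _ = (i + m) * ((i + m) + 2 * (j + m) + 1) := twoSum _ _
      _ = (i + m) * (i + 2 * j + 3 * m + 1) := by ring
  have hkey := keyId i j k
  rw [Finset.sum_add_distrib, ← hS₁, ← hS₂] at hkey
  have hB := evenB i j
  omega
end

section
/- For every integer l ≥ 1, (l+1)(l+2)(2l+3)(3l+4)(3l+5)/120 = ∑_{i=0}^{⌊l/2⌋} [ ∑_{k=i}^{l-i} d_{A₂}(k,i) + ∑_{j=i+1}^{l-i} d_{A₂}(i,j) + ∑_{k=i+1}^{l-i} ∑_{j=i+1}^{l-i} ( N₁(k,j) + N₂(k,j) ) ], where d_{A₂}(m,n) = (m+1)(n+1)(m+n+2)/2, N₁(k,j) is the number of integer pairs (p,q) with 0 ≤ p ≤ j and 0 ≤ q ≤ p+k, N₂(k,j) is the number of integer pairs (p,q) with 0 ≤ p ≤ k−1 and 0 ≤ q ≤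 p+j, and empty sums are zero. (This is Proposition 'lLambda': ♯B^{G₂}(lΛ₁) = ♯𝒜^{(l)}.) -/
open Finset

private lemma two_dvd_d (k i : ℕ) : 2 ∣ (k + 1) * (i + 1) * (k + i + 2) := by
  rcases Nat.even_or_odd k with ⟨a, rfl⟩ | ⟨a, rfl⟩
  · rcases Nat.even_or_odd i with ⟨b, rfl⟩ | ⟨b, rfl⟩
    · exact ⟨(a + a + 1) * (b + b + 1) * (a + b + 1), by ring⟩
    · exact ⟨(a + a + 1) * (b + 1) * (a + a + 2 * b + 3), by ring⟩
  · exact ⟨(a + 1) * (i + 1) * (2 * a + i + 3), by ring⟩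

private lemma castd (k i : ℕ) :
    (((k + 1) * (i + 1) * (k + i + 2) / 2 : ℕ) : ℚ)
      = ((k : ℚ) + 1) * ((i : ℚ) + 1) * ((k : ℚ) + (i : ℚ) + 2) / 2 := by
  rw [Nat.cast_div (two_dvd_d k i) (by norm_num)]
  push_cast
  ring

private lemma castd2 (i j : ℕ) :
    (((i + 1) * (j + 1) * (i + j + 2) / 2 : ℕ) : ℚ)
      = ((i : ℚ) + 1) * ((j : ℚ) + 1) * ((i : ℚ) + (j : ℚ) + 2) / 2 := by
  have h : 2 ∣ (i + 1) * (j + 1) * (i + j + 2) := by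
    obtain ⟨c, hc⟩ := two_dvd_d j i
    exact ⟨c, by rw [← hc]; ring⟩
  rw [Nat.cast_div h (by norm_num)]
  push_cast
  ring

private lemma sumLin (c : ℚ) (N : ℕ) :
    ∑ p ∈ range N, ((p : ℚ) + c) = N * c + N * (N - 1) / 2 := by
  induction N with
  | zero => simp
  | succ N ih => rw [sum_range_succ, ih]; push_cast; ring

private lemma Ncast1 (k j : ℕ) :
    ((((range (j + 1)).sigma fun p => range (p + k + 1)).card : ℕ) : ℚ)
      = ((j : ℚ) + 1) * ((k : ℚ) + 1) + ((j : ℚ) + 1) * (j : ℚ) / 2 := by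
  rw [card_sigma]
  simp only [card_range]
  push_cast
  calc ∑ p ∈ range (j + 1), ((p : ℚ) + (k : ℚ) + 1)
      = ∑ p ∈ range (j + 1), ((p : ℚ) + ((k : ℚ) + 1)) := by
        exact sum_congr rfl fun p _ => by ring
    _ = ((j : ℚ) + 1) * ((k : ℚ) + 1) + ((j : ℚ) + 1) * (j : ℚ) / 2 := by
        rw [sumLin]; push_cast; try ring

private lemma Ncast2 (k j : ℕ) :
    ((((range k).sigma fun p => range (p + j + 1)).card : ℕ) : ℚ)
      = (k : ℚ) * ((j : ℚ) + 1) + (k : ℚ) * ((k : ℚ) - 1) / 2 := by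
  rw [card_sigma]
  simp only [card_range]
  push_cast
  calc ∑ p ∈ range k, ((p : ℚ) + (j : ℚ) + 1)
      = ∑ p ∈ range k, ((p : ℚ) + ((j : ℚ) + 1)) := by
        exact sum_congr rfl fun p _ => by ring
    _ = (k : ℚ) * ((j : ℚ) + 1) + (k : ℚ) * ((k : ℚ) - 1) / 2 := by
        rw [sumLin]; try ring

private lemma sA (x : ℚ) (N : ℕ) :
    ∑ a ∈ range N, ((x + 1 + a) * (x + 1) * (2 * x + 2 + a) / 2)
      = (1/3 : ℚ) * N + (1/2 : ℚ) * N^2 + (1/6 : ℚ) * N^3 + (19/12 : ℚ) * x * N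
        + (5/4 : ℚ) * x * N^2 + (1/6 : ℚ) * x * N^3 + (9/4 : ℚ) * x^2 * N
        + (3/4 : ℚ) * x^2 * N^2 + x^3 * N := by
  induction N with
  | zero => simp
  | succ N ih => rw [sum_range_succ, ih]; push_cast; ring

private lemma sB (x : ℚ) (N : ℕ) :
    ∑ b ∈ range N, ((x + 1) * (x + 2 + b) * (2 * x + 3 + b) / 2)
      = (11/6 : ℚ) * N + (N : ℚ)^2 + (1/6 : ℚ) * N^3 + (55/12 : ℚ) * x * N
        + (7/4 : ℚ) * x * N^2 + (1/6 : ℚ) * x * N^3 + (15/4 : ℚ) * x^2 * N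
        + (3/4 : ℚ) * x^2 * N^2 + x^3 * N := by
  induction N with
  | zero => simp
  | succ N ih => rw [sum_range_succ, ih]; push_cast; ring

private lemma sCb (x y : ℚ) (N : ℕ) :
    ∑ b ∈ range N, ((x + 2 + b) * (y + 1) + (x + 1 + b) * (x + 2 + b) / 2
        + y * (x + 2 + b) + y * (y - 1) / 2)
      = (11/6 : ℚ) * N + (5/2 : ℚ) * N * y + (1/2 : ℚ) * N * y^2 + (N : ℚ)^2
        + (N : ℚ)^2 * y + (1/6 : ℚ) * N^3 + 2 * x * N + 2 * x * N * y
        + (1/2 : ℚ) * x * N^2 + (1/2 : ℚ) * x^2 * N := by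
  induction N with
  | zero => simp
  | succ N ih => rw [sum_range_succ, ih]; push_cast; ring

private lemma sCa (x n : ℚ) (N : ℕ) :
    ∑ a ∈ range N, ((29/6 : ℚ) * n + (7/2 : ℚ) * n * a + (1/2 : ℚ) * n * (a : ℚ)^2
        + 2 * n^2 + n^2 * a + (1/6 : ℚ) * n^3 + (15/2 : ℚ) * x * n + 3 * x * n * a
        + (3/2 : ℚ) * x * n^2 + 3 * x^2 * n)
      = (19/6 : ℚ) * n * N + (3/2 : ℚ) * n * N^2 + (1/6 : ℚ) * n * N^3
        + (3/2 : ℚ) * n^2 * N + (1/2 : ℚ) * n^2 * N^2 + (1/6 : ℚ) * n^3 * N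
        + 6 * x * n * N + (3/2 : ℚ) * x * n * N^2 + (3/2 : ℚ) * x * n^2 * N
        + 3 * x^2 * n * N := by
  induction N with
  | zero => simp
  | succ N ih => rw [sum_range_succ, ih]; push_cast; ring

private lemma sOut (L : ℚ) (N : ℕ) :
    ∑ i ∈ range N, ((1 : ℚ) + (11/3 : ℚ) * L + (31/6 : ℚ) * L^2 + (10/3 : ℚ) * L^3
        + (5/6 : ℚ) * L^4 - (13/3 : ℚ) * i - (23/2 : ℚ) * i * L - (21/2 : ℚ) * i * L^2
        - (10/3 : ℚ) * i * L^3 + (16/3 : ℚ) * (i : ℚ)^2 + (19/2 : ℚ) * (i : ℚ)^2 * L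
        + (9/2 : ℚ) * (i : ℚ)^2 * L^2 - (8/3 : ℚ) * (i : ℚ)^3 - (8/3 : ℚ) * (i : ℚ)^3 * L
        + (2/3 : ℚ) * (i : ℚ)^4)
      = (121/30 : ℚ) * N - (11/2 : ℚ) * N^2 + (10/3 : ℚ) * N^3 - (N : ℚ)^4
        + (2/15 : ℚ) * N^5 + 11 * L * N - (67/6 : ℚ) * L * N^2 + (9/2 : ℚ) * L * N^3
        - (2/3 : ℚ) * L * N^4 + (67/6 : ℚ) * L^2 * N - (15/2 : ℚ) * L^2 * N^2
        + (3/2 : ℚ) * L^2 * N^3 + 5 * L^3 * N - (5/3 : ℚ) * L^3 * N^2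
        + (5/6 : ℚ) * L^4 * N := by
  induction N with
  | zero => simp
  | succ N ih => rw [sum_range_succ, ih]; push_cast; ring

private lemma bracket_eval (i n : ℕ) :
    (((∑ k ∈ Icc i (i + n), (k + 1) * (i + 1) * (k + i + 2) / 2) +
      (∑ j ∈ Icc (i + 1) (i + n), (i + 1) * (j + 1) * (i + j + 2) / 2) +
      (∑ k ∈ Icc (i + 1) (i + n), ∑ j ∈ Icc (i + 1) (i + n),
         (((range (j + 1)).sigma fun p => range (p + k + 1)).card +
          ((range k).sigma fun p => range (p + j + 1)).card)) : ℕ) : ℚ)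
      = 1 + (11/3 : ℚ) * n + (31/6 : ℚ) * (n : ℚ)^2 + (10/3 : ℚ) * (n : ℚ)^3
        + (5/6 : ℚ) * (n : ℚ)^4 + 3 * i + (55/6 : ℚ) * i * n + (19/2 : ℚ) * i * (n : ℚ)^2
        + (10/3 : ℚ) * i * (n : ℚ)^3 + 3 * (i : ℚ)^2 + (15/2 : ℚ) * (i : ℚ)^2 * n
        + (9/2 : ℚ) * (i : ℚ)^2 * (n : ℚ)^2 + (i : ℚ)^3 + 2 * (i : ℚ)^3 * n := by
  have e1 : i + n + 1 - i = n + 1 := by omega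
  have e2 : i + n + 1 - (i + 1) = n := by omega
  have hA : ((∑ k ∈ Icc i (i + n), (k + 1) * (i + 1) * (k + i + 2) / 2 : ℕ) : ℚ)
      = ∑ a ∈ range (n + 1), (((i : ℚ) + 1 + a) * ((i : ℚ) + 1) * (2 * (i : ℚ) + 2 + a) / 2) := by
    rw [Nat.cast_sum, ← Finset.Ico_add_one_right_eq_Icc, sum_Ico_eq_sum_range, e1]
    exact sum_congr rfl fun a _ => by rw [castd]; push_cast; ring
  have hB : ((∑ j ∈ Icc (i + 1) (i + n), (i + 1) * (j + 1) * (i + j + 2) / 2 : ℕ) : ℚ)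
      = ∑ b ∈ range n, (((i : ℚ) + 1) * ((i : ℚ) + 2 + b) * (2 * (i : ℚ) + 3 + b) / 2) := by
    rw [Nat.cast_sum, ← Finset.Ico_add_one_right_eq_Icc, sum_Ico_eq_sum_range, e2]
    exact sum_congr rfl fun b _ => by rw [castd2]; push_cast; ring
  have hC : ((∑ k ∈ Icc (i + 1) (i + n), ∑ j ∈ Icc (i + 1) (i + n),
        (((range (j + 1)).sigma fun p => range (p + k + 1)).card +
         ((range k).sigma fun p => range (p + j + 1)).card) : ℕ) : ℚ)
      = ∑ a ∈ range n, ((29/6 : ℚ) * n + (7/2 : ℚ) * n * a + (1/2 : ℚ) * n * (a : ℚ)^2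
          + 2 * (n : ℚ)^2 + (n : ℚ)^2 * a + (1/6 : ℚ) * (n : ℚ)^3 + (15/2 : ℚ) * i * n
          + 3 * i * n * a + (3/2 : ℚ) * i * (n : ℚ)^2 + 3 * (i : ℚ)^2 * n) := by
    rw [Nat.cast_sum, ← Finset.Ico_add_one_right_eq_Icc, sum_Ico_eq_sum_range, e2]
    refine sum_congr rfl fun a _ => ?_
    rw [Nat.cast_sum, sum_Ico_eq_sum_range, e2]
    calc ∑ b ∈ range n,
          ((((range ((i + 1 + b) + 1)).sigma fun p => range (p + (i + 1 + a) + 1)).card +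
            ((range (i + 1 + a)).sigma fun p => range (p + (i + 1 + b) + 1)).card : ℕ) : ℚ)
        = ∑ b ∈ range n, (((i : ℚ) + 2 + b) * (((i : ℚ) + 1 + a) + 1)
            + ((i : ℚ) + 1 + b) * ((i : ℚ) + 2 + b) / 2
            + ((i : ℚ) + 1 + a) * ((i : ℚ) + 2 + b)
            + ((i : ℚ) + 1 + a) * (((i : ℚ) + 1 + a) - 1) / 2) := by
          refine sum_congr rfl fun b _ => ?_
          rw [Nat.cast_add, Ncast1, Ncast2]
          push_cast
          ring
      _ = _ := by rw [sCb]; ring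
  rw [Nat.cast_add, Nat.cast_add, hA, hB, hC, sA, sB, sCa]
  push_cast
  ring

/-- Proposition `lLambda`: ♯B^{G₂}(lΛ₁) = ♯𝒜^{(l)}. Explicitly, for l ≥ 1,
(l+1)(l+2)(2l+3)(3l+4)(3l+5)/120 = ∑_{i=0}^{⌊l/2⌋} [ ∑_{k=i}^{l-i} d_{A₂}(k,i)
+ ∑_{j=i+1}^{l-i} d_{A₂}(i,j) + ∑_{k=i+1}^{l-i} ∑_{j=i+1}^{l-i} (N₁(k,j) + N₂(k,j)) ],
where N₁(k,j) = #{(p,q) : 0 ≤ p ≤ j, 0 ≤ q ≤ p+k} and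
N₂(k,j) = #{(p,q) : 0 ≤ p ≤ k−1, 0 ≤ q ≤ p+j}. -/
theorem stmt_9 (l : ℕ) (hl : 1 ≤ l) :
    (l + 1) * (l + 2) * (2 * l + 3) * (3 * l + 4) * (3 * l + 5) / 120 =
    ∑ i ∈ range (l / 2 + 1),
      ((∑ k ∈ Icc i (l - i), (k + 1) * (i + 1) * (k + i + 2) / 2) +
       (∑ j ∈ Icc (i + 1) (l - i), (i + 1) * (j + 1) * (i + j + 2) / 2) +
       (∑ k ∈ Icc (i + 1) (l - i), ∑ j ∈ Icc (i + 1) (l - i),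
          (((range (j + 1)).sigma fun p => range (p + k + 1)).card +
           ((range k).sigma fun p => range (p + j + 1)).card))) := by
  apply Nat.div_eq_of_eq_mul_left (by norm_num)
  have hS : ((∑ i ∈ range (l / 2 + 1),
      ((∑ k ∈ Icc i (l - i), (k + 1) * (i + 1) * (k + i + 2) / 2) +
       (∑ j ∈ Icc (i + 1) (l - i), (i + 1) * (j + 1) * (i + j + 2) / 2) +
       (∑ k ∈ Icc (i + 1) (l - i), ∑ j ∈ Icc (i + 1) (l - i),
          (((range (j + 1)).sigma fun p => range (p + k + 1)).card +
           ((range k).sigma fun p => range (p + j + 1)).card))) : ℕ) : ℚ)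
      = (121/30 : ℚ) * (l / 2 + 1 : ℕ) - (11/2 : ℚ) * ((l / 2 + 1 : ℕ) : ℚ)^2
        + (10/3 : ℚ) * ((l / 2 + 1 : ℕ) : ℚ)^3 - ((l / 2 + 1 : ℕ) : ℚ)^4
        + (2/15 : ℚ) * ((l / 2 + 1 : ℕ) : ℚ)^5 + 11 * l * (l / 2 + 1 : ℕ)
        - (67/6 : ℚ) * l * ((l / 2 + 1 : ℕ) : ℚ)^2 + (9/2 : ℚ) * l * ((l / 2 + 1 : ℕ) : ℚ)^3
        - (2/3 : ℚ) * l * ((l / 2 + 1 : ℕ) : ℚ)^4 + (67/6 : ℚ) * (l : ℚ)^2 * (l / 2 + 1 : ℕ)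
        - (15/2 : ℚ) * (l : ℚ)^2 * ((l / 2 + 1 : ℕ) : ℚ)^2
        + (3/2 : ℚ) * (l : ℚ)^2 * ((l / 2 + 1 : ℕ) : ℚ)^3 + 5 * (l : ℚ)^3 * (l / 2 + 1 : ℕ)
        - (5/3 : ℚ) * (l : ℚ)^3 * ((l / 2 + 1 : ℕ) : ℚ)^2
        + (5/6 : ℚ) * (l : ℚ)^4 * (l / 2 + 1 : ℕ) := by
    rw [Nat.cast_sum]
    rw [← sOut (l : ℚ) (l / 2 + 1)]
    refine sum_congr rfl fun i hi => ?_
    have h2 : 2 * i ≤ l := by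
      have := mem_range.mp hi
      omega
    have hli : l - i = i + (l - 2 * i) := by omega
    rw [hli, bracket_eval]
    have hc : ((l - 2 * i : ℕ) : ℚ) = (l : ℚ) - 2 * i := by
      rw [Nat.cast_sub h2]; push_cast; ring
    rw [hc]
    ring
  rw [← Nat.cast_inj (R := ℚ)]
  conv_rhs => rw [Nat.cast_mul]
  rw [hS]
  push_cast
  rcases Nat.even_or_odd l with ⟨m, rfl⟩ | ⟨m, rfl⟩
  · rw [show (m + m) / 2 = m from by omega]
    push_cast
    ring
  · rw [show (2 * m + 1) / 2 = m from by omega]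
    push_cast
    ring
end
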